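/- arXiv:1004.0197 — 9 statements merged into one kernel-verified Lean document; each statement's English description precedes it below -/
import Mathlib

section
/- For every complex number λ with λ² − 5λ + 2 = 0, every nonzero integer n, and every integer m with |m| ≥ 2, we have λ^n ≠ m (where λ^n denotes the integer power zpow, noting λ ≠ 0 since λ divides 2). -/
/-!
Every positive power of a root `x` of `X² - 5X + 2` can be written as `x ^ (k + 1) = a x + b`
with integers `a > 0` and `b`, so if such a power were rational then so would be `x`. But
`X² - 5X + 2` has discriminant `17`, which is not a rational square. Negative powers reduce to
positive ones by inverting.
-/

def lucasU (s p : ℤ) : ℕ → ℤ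
  | 0 => 0
  | 1 => 1
  | k + 2 => s * lucasU s p (k + 1) - p * lucasU s p k

section LucasU

variable (s p : ℤ)

theorem pow_succ_eq_lucasU {R : Type*} [CommRing R] {x : R} (hx : x ^ 2 = s * x - p) (k : ℕ) :
    x ^ (k + 1) = lucasU s p (k + 1) * x - p * lucasU s p k := by
  induction k with
  | zero => simp [lucasU]
  | succ k ih =>
    rw [pow_succ, ih, lucasU]
    push_cast
    linear_combination (lucasU s p (k + 1) : R) * hx

variable {s p}

theorem lucasU_succ_pos_and_monotone (hp : 0 ≤ p) (hps : p + 1 ≤ s) (k : ℕ) :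
    0 < lucasU s p (k + 1) ∧ lucasU s p k ≤ lucasU s p (k + 1) := by
  induction k with
  | zero => simp [lucasU]
  | succ k ih =>
    obtain ⟨hpos, hmono⟩ := ih
    have hstep : lucasU s p (k + 2) = s * lucasU s p (k + 1) - p * lucasU s p k := rfl
    have hlow : lucasU s p (k + 1) ≤ lucasU s p (k + 2) := by
      rw [hstep]
      nlinarith [mul_le_mul_of_nonneg_left hmono hp]
    exact ⟨hpos.trans_le hlow, hlow⟩

theorem lucasU_succ_pos (hp : 0 ≤ p) (hps : p + 1 ≤ s) (k : ℕ) : 0 < lucasU s p (k + 1) :=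
  (lucasU_succ_pos_and_monotone hp hps k).1

end LucasU

theorem rat_sq_sub_five_mul_add_two_ne_zero (q : ℚ) : q ^ 2 - 5 * q + 2 ≠ 0 := by
  intro hq
  have h17 : IsSquare (17 : ℚ) := ⟨2 * q - 5, by linear_combination -4 * hq⟩
  norm_num at h17

section Root

variable {K : Type*} [Field K] [CharZero K] {x : K}

theorem ne_ratCast_of_sq_sub_five_mul_add_two (hx : x ^ 2 - 5 * x + 2 = 0) (q : ℚ) :
    x ≠ q := by
  rintro rfl
  exact rat_sq_sub_five_mul_add_two_ne_zero q (by exact_mod_cast hx)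

theorem pow_ne_ratCast_of_sq_sub_five_mul_add_two (hx : x ^ 2 - 5 * x + 2 = 0) {k : ℕ}
    (hk : k ≠ 0) (q : ℚ) : x ^ k ≠ q := by
  obtain ⟨k, rfl⟩ := Nat.exists_eq_succ_of_ne_zero hk
  intro hxq
  have hU : (lucasU 5 2 (k + 1) : ℚ) ≠ 0 := by
    exact_mod_cast (lucasU_succ_pos (by norm_num) (by norm_num) k).ne'
  rw [pow_succ_eq_lucasU 5 2 (by linear_combination hx)] at hxq
  refine ne_ratCast_of_sq_sub_five_mul_add_two hx ((q + 2 * lucasU 5 2 k) / lucasU 5 2 (k + 1)) ?_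
  push_cast
  rw [eq_div_iff (by exact_mod_cast hU)]
  linear_combination hxq

theorem zpow_ne_ratCast_of_sq_sub_five_mul_add_two (hx : x ^ 2 - 5 * x + 2 = 0) {n : ℤ}
    (hn : n ≠ 0) (q : ℚ) : x ^ n ≠ q := by
  obtain ⟨k, rfl | rfl⟩ := n.eq_nat_or_neg
  · rw [zpow_natCast]
    exact pow_ne_ratCast_of_sq_sub_five_mul_add_two hx (by omega) q
  · rw [zpow_neg, zpow_natCast, Ne, inv_eq_iff_eq_inv, ← Rat.cast_inv]
    exact pow_ne_ratCast_of_sq_sub_five_mul_add_two hx (by omega) q⁻¹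

end Root

theorem root_zpow_ne_int_general (l : ℂ) (hl : l ^ 2 - 5 * l + 2 = 0)
    (n : ℤ) (hn : n ≠ 0) (m : ℤ) :
    l ^ n ≠ (m : ℂ) := by
  rw [← Rat.cast_intCast]
  exact zpow_ne_ratCast_of_sq_sub_five_mul_add_two hl hn m

/-- For every complex root `l` of `x² - 5x + 2`, every nonzero integer `n` and
every integer `m` with `|m| ≥ 2`, we have `l ^ n ≠ m`. -/
theorem root_zpow_ne_int (l : ℂ) (hl : l ^ 2 - 5 * l + 2 = 0)
    (n : ℤ) (hn : n ≠ 0) (m : ℤ) (hm : 2 ≤ |m|) :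
    l ^ n ≠ (m : ℂ) :=
  root_zpow_ne_int_general l hl n hn m
end

section
/- There do not exist a nonzero element a ∈ ℤ × ℤ, a natural number k ≥ 1, and an integer m with |m| ≥ 2 such that θ₀^[k](a) = m • a; and there do not exist such a, k, m with θ₀^[k](m • a) = a. (Here θ₀^[k] denotes the k-fold iterate of θ₀.) -/
/-- The endomorphism `θ₀` of `ℤ × ℤ` given by `θ₀ (a, b) = (5 * a + 2 * b, -a)`. -/
def θ₀ : (ℤ × ℤ) →+ (ℤ × ℤ) where
  toFun p := (5 * p.1 + 2 * p.2, -p.1)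
  map_zero' := by simp
  map_add' p q := by
    simp only [Prod.fst_add, Prod.snd_add, Prod.mk_add_mk, Prod.mk.injEq]
    constructor <;> ring

lemma θ₀_apply (p : ℤ × ℤ) : θ₀ p = (5 * p.1 + 2 * p.2, -p.1) := rfl

/-- auxiliary sequence -/
def sSeq : ℕ → ℤ
  | 0 => 0
  | 1 => 1
  | (k+2) => 5 * sSeq (k+1) - 2 * sSeq k

lemma sSeq_nonneg_mono : ∀ k, 0 ≤ sSeq k ∧ sSeq k ≤ sSeq (k+1)
  | 0 => by norm_num [sSeq]
  | 1 => by norm_num [sSeq]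
  | (k+2) => by
    obtain ⟨h0, h1⟩ := sSeq_nonneg_mono (k+1)
    obtain ⟨h0', h1'⟩ := sSeq_nonneg_mono k
    have h3 : sSeq (k+3) = 5 * sSeq (k+2) - 2 * sSeq (k+1) := rfl
    constructor
    · linarith
    · rw [h3]; linarith

lemma sSeq_pos : ∀ k, 1 ≤ sSeq (k+1)
  | 0 => by norm_num [sSeq]
  | (k+1) => le_trans (sSeq_pos k) (sSeq_nonneg_mono (k+1)).2

lemma nat17 : ∀ n, ∀ m : ℕ, n^2 = 17 * m^2 → m = 0 := by
  intro n
  induction n using Nat.strong_induction_on with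
  | _ n ih =>
    intro m h
    rcases Nat.eq_zero_or_pos n with hn | hn
    · subst hn; simpa using h.symm
    have h17 : Nat.Prime 17 := by norm_num
    have hdvd : 17 ∣ n := h17.dvd_of_dvd_pow ⟨m^2, h⟩
    obtain ⟨u, rfl⟩ := hdvd
    have h2 : m^2 = 17 * u^2 := by nlinarith
    have hmlt : m < 17 * u := by nlinarith
    have hu : u = 0 := ih m hmlt u h2
    subst hu
    simpa using h2

lemma quad (S n : ℤ) (hS : S ≠ 0) : n^2 - 5*S*n + 2*S^2 ≠ 0 := by
  intro h
  have key : (2*n - 5*S)^2 = 17 * S^2 := by nlinarith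
  have key2 : ((2*n - 5*S).natAbs)^2 = 17 * (S.natAbs)^2 := by
    have := congrArg Int.natAbs key
    simpa [Int.natAbs_mul, Int.natAbs_pow] using this
  have := nat17 _ _ key2
  exact hS (Int.natAbs_eq_zero.mp this)

lemma key_lemma (x y S n : ℤ) (hS : S ≠ 0) (hxy : ¬(x = 0 ∧ y = 0))
    (e1 : S * (5*x + 2*y) = n * x) (e2 : -(S*x) = n * y) : False := by
  have hx : (n^2 - 5*S*n + 2*S^2) * x = 0 := by linear_combination (-n) * e1 - 2*S*e2
  have hy : (n^2 - 5*S*n + 2*S^2) * y = 0 := by linear_combination S * e1 + (5*S - n) * e2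
  have hq := quad S n hS
  rcases mul_eq_zero.mp hx with h | h
  · exact hq h
  · rcases mul_eq_zero.mp hy with h' | h'
    · exact hq h'
    · exact hxy ⟨h, h'⟩

lemma iter_formula : ∀ (j : ℕ) (p : ℤ × ℤ),
    (⇑θ₀)^[j+1] p = (sSeq (j+1) * (5*p.1 + 2*p.2) - 2 * sSeq j * p.1,
                     -(sSeq (j+1) * p.1) - 2 * sSeq j * p.2)
  | 0, p => by
    simp only [zero_add, Function.iterate_one, θ₀_apply]
    norm_num [sSeq]
  | (j+1), p => by
    rw [Function.iterate_succ_apply', iter_formula j p, θ₀_apply]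
    have hs : sSeq (j+2) = 5 * sSeq (j+1) - 2 * sSeq j := rfl
    simp only [hs, Prod.mk.injEq]
    constructor <;> ring

/-- No nonzero `a ∈ ℤ × ℤ`, `k ≥ 1` and integer `m` with `|m| ≥ 2` satisfy
`θ₀^[k] a = m • a`, nor `θ₀^[k] (m • a) = a`. -/
theorem no_eigen_iterate :
    (¬ ∃ (a : ℤ × ℤ) (k : ℕ) (m : ℤ), a ≠ 0 ∧ 1 ≤ k ∧ 2 ≤ |m| ∧
        (⇑θ₀)^[k] a = m • a) ∧
    (¬ ∃ (a : ℤ × ℤ) (k : ℕ) (m : ℤ), a ≠ 0 ∧ 1 ≤ k ∧ 2 ≤ |m| ∧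
        (⇑θ₀)^[k] (m • a) = a) := by
  constructor
  · rintro ⟨a, k, m, ha, hk, hm, heq⟩
    obtain ⟨j, rfl⟩ : ∃ j, k = j + 1 := ⟨k - 1, (Nat.succ_pred_eq_of_pos hk).symm⟩
    rw [iter_formula j a] at heq
    have hsm : (m • a) = (m * a.1, m * a.2) := rfl
    rw [hsm, Prod.mk.injEq] at heq
    obtain ⟨e1, e2⟩ := heq
    have hS : sSeq (j+1) ≠ 0 := by have := sSeq_pos j; omega
    have hxy : ¬(a.1 = 0 ∧ a.2 = 0) := by
      rintro ⟨h1, h2⟩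
      exact ha (Prod.ext h1 h2)
    exact key_lemma a.1 a.2 (sSeq (j+1)) (m + 2 * sSeq j) hS hxy
      (by linarith) (by linarith)
  · rintro ⟨a, k, m, ha, hk, hm, heq⟩
    obtain ⟨j, rfl⟩ : ∃ j, k = j + 1 := ⟨k - 1, (Nat.succ_pred_eq_of_pos hk).symm⟩
    have hsm : (m • a) = (m * a.1, m * a.2) := rfl
    rw [hsm, iter_formula j] at heq
    have heq2 : (sSeq (j+1) * (5*(m*a.1) + 2*(m*a.2)) - 2 * sSeq j * (m*a.1),
        -(sSeq (j+1) * (m*a.1)) - 2 * sSeq j * (m*a.2)) = (a.1, a.2) := heq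
    rw [Prod.mk.injEq] at heq2
    obtain ⟨e1, e2⟩ := heq2
    have hm0 : m ≠ 0 := by
      intro h; rw [h] at hm; simp at hm
    have hS : m * sSeq (j+1) ≠ 0 := by
      have := sSeq_pos j
      exact mul_ne_zero hm0 (by omega)
    have hxy : ¬(a.1 = 0 ∧ a.2 = 0) := by
      rintro ⟨h1, h2⟩
      exact ha (Prod.ext h1 h2)
    exact key_lemma a.1 a.2 (m * sSeq (j+1)) (1 + 2 * m * sSeq j) hS hxy
      (by linarith [e1]; ) (by linarith [e2])
end

section
/- In the group G₁, for all elements x, y ∈ G₁ and every integer m with |m| ≥ 2, if y · x · y⁻¹ = x^m then x is of finite order (and hence, G₁ being torsion-free, x = 1). Consequently G₁ contains no soluble Baumslag–Solitar subgroup BS(1, m). -/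
/-- The multiplicative version of `θ₀`. -/
def Θ₁ : Multiplicative (ℤ × ℤ) →* Multiplicative (ℤ × ℤ) :=
  AddMonoidHom.toMultiplicative θ₀

theorem Θ₁_injective : Function.Injective Θ₁ := by
  intro p q h
  have h' : θ₀ p.toAdd = θ₀ q.toAdd := h
  have : p.toAdd = q.toAdd := by
    have h1 := congrArg Prod.fst h'
    have h2 := congrArg Prod.snd h'
    simp only [θ₀, AddMonoidHom.coe_mk, ZeroHom.coe_mk] at h1 h2
    ext <;> omega
  exact this

/-- The isomorphism from the base group onto the range of `Θ₁`. -/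
noncomputable def φ₁ : (⊤ : Subgroup (Multiplicative (ℤ × ℤ))) ≃* Θ₁.range :=
  Subgroup.topEquiv.trans (MonoidHom.ofInjective Θ₁_injective)

/-- The ascending HNN extension of `ℤ × ℤ` along `θ₀`. -/
abbrev G₁ := HNNExtension (Multiplicative (ℤ × ℤ)) ⊤ Θ₁.range φ₁

/-!
`G₁` embeds in `ℚ² ⋊ ℤ`, where `ℤ` acts through the rational extension `θℚ` of `θ₀`. There a
relation `y x y⁻¹ = xᵐ` with `m ≠ 1` kills the `ℤ`-coordinate of `x`, so `x` is a vector `w`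
with `θℚᶜ w = m • w` for some `c`. For `c = 0` this gives `w = 0`. For `c ≠ 0` and `w ≠ 0`:
`θℚ` has no rational eigenvector (its discriminant `17` is not a square), so `w` and `θℚ w` are
independent eigenvectors of `θℚᶜ`, which is then scalar; but `θℚ` maps the cone
`0 < a, -a ≤ b ≤ 0` into itself and sends `(0, 1)` inside it, so no nonzero power of `θℚ` fixes
the line through `(0, 1)`.
-/

open HNNExtension SemidirectProduct Multiplicative

namespace HNNExtension

variable {G : Type*} [Group G] {B : Subgroup G} {φ : (⊤ : Subgroup G) ≃* B}

theorem exists_t_pow_mul_of_mul_inv (n : ℕ) (k : G) :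
    ∃ k' : G, (t ^ n : HNNExtension G ⊤ B φ) * of k * (t ^ n)⁻¹ = of k' := by
  induction n generalizing k with
  | zero => exact ⟨k, by simp⟩
  | succ n ih =>
    obtain ⟨k', hk'⟩ := ih (φ ⟨k, Subgroup.mem_top k⟩)
    refine ⟨k', ?_⟩
    have ht := t_mul_of (A := ⊤) (B := B) (φ := φ) ⟨k, Subgroup.mem_top k⟩
    rw [← hk', ← mul_inv_eq_of_eq_mul ht]
    group

theorem exists_eq_inv_t_pow_mul_of_mul_t_pow (g : HNNExtension G ⊤ B φ) :
    ∃ (a b : ℕ) (k : G), g = (t ^ a)⁻¹ * of k * t ^ b := by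
  induction g using HNNExtension.induction_on with
  | of k => exact ⟨0, 0, k, by simp⟩
  | t => exact ⟨0, 1, 1, by simp⟩
  | inv g ih =>
    obtain ⟨a, b, k, rfl⟩ := ih
    exact ⟨b, a, k⁻¹, by rw [map_inv]; group⟩
  | mul g g' ih ih' =>
    obtain ⟨a, b, k, rfl⟩ := ih
    obtain ⟨c, d, k', rfl⟩ := ih'
    rcases le_total c b with h | h
    · obtain ⟨e, rfl⟩ := Nat.exists_eq_add_of_le h
      obtain ⟨k'', hk''⟩ := exists_t_pow_mul_of_mul_inv (B := B) (φ := φ) e k'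
      exact ⟨a, e + d, k * k'', by rw [map_mul, ← hk'']; group⟩
    · obtain ⟨e, rfl⟩ := Nat.exists_eq_add_of_le h
      obtain ⟨k'', hk''⟩ := exists_t_pow_mul_of_mul_inv (B := B) (φ := φ) e k
      exact ⟨a + e, d, k'' * k', by rw [map_mul, ← hk'']; group⟩

theorem lift_injective_of_top {H : Type*} [Group H] {f : G →* H} {x : H}
    (hx : ∀ a : (⊤ : Subgroup G), x * f a = f (φ a) * x) (hf : Function.Injective f)
    (ρ : H →* Multiplicative ℤ) (hρf : ∀ k, ρ (f k) = 1) (hρx : ρ x = ofAdd 1) :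
    Function.Injective (lift f x hx) := by
  refine (injective_iff_map_eq_one _).2 fun g hg => ?_
  obtain ⟨a, b, k, rfl⟩ := exists_eq_inv_t_pow_mul_of_mul_t_pow g
  simp only [map_mul, map_inv, map_pow, lift_t, lift_of] at hg
  obtain rfl : a = b := by
    have := congrArg (toAdd ∘ ρ) hg
    simp only [Function.comp_apply, map_mul, map_inv, map_pow, hρx, hρf, mul_one, toAdd_mul,
      toAdd_inv, toAdd_pow, toAdd_ofAdd, Int.nsmul_eq_mul, map_one, toAdd_one] at this
    omega
  have hk : f k = 1 :=
    calc f k = x ^ a * ((x ^ a)⁻¹ * f k * x ^ a) * (x ^ a)⁻¹ := by group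
      _ = 1 := by rw [hg]; group
  rw [(map_eq_one_iff f hf).1 hk, map_one]
  group

end HNNExtension

theorem MonoidHom.map_eq_one_of_conj_eq_zpow {H A : Type*} [Group H] [CommGroup A]
    [IsMulTorsionFree A] (ρ : H →* A) {x y : H} {m : ℤ} (hm : m ≠ 1)
    (h : y * x * y⁻¹ = x ^ m) : ρ x = 1 := by
  have hρ : ρ x ^ (m - 1) = 1 ^ (m - 1) := by
    have := congrArg ρ h
    rw [map_mul, map_mul, map_inv, mul_inv_cancel_comm, map_zpow] at this
    rw [zpow_sub_one, ← this, mul_inv_cancel, one_zpow]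
  exact zpow_left_injective (sub_ne_zero.2 hm) hρ

theorem SemidirectProduct.conj_inl {N G : Type*} [CommGroup N] [Group G]
    {φ : G →* MulAut N} (y : N ⋊[φ] G) (n : N) :
    y * inl n * y⁻¹ = inl (φ y.right n) := by
  ext <;> simp [mul_left, inv_left, mul_comm]

theorem Prod.apply_eq_smul_of_apply_eq_smul {K : Type*} [Field K] (f : K × K →ₗ[K] K × K)
    {u v : K × K} {r : K} (hu : f u = r • u) (hv : f v = r • v)
    (huv : u.1 * v.2 - u.2 * v.1 ≠ 0) (z : K × K) : f z = r • z := by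
  have hz : (u.1 * v.2 - u.2 * v.1) • z
      = (z.1 * v.2 - z.2 * v.1) • u + (u.1 * z.2 - u.2 * z.1) • v := by
    ext <;> simp <;> ring
  apply smul_right_injective _ huv
  dsimp only
  rw [← map_smul, hz, map_add, map_smul, map_smul, hu, hv, smul_comm _ r z, hz]
  module

def LinearEquiv.toMulAutMultiplicative {R M : Type*} [Semiring R] [AddCommMonoid M]
    [Module R M] : (M ≃ₗ[R] M) →* MulAut (Multiplicative M) where
  toFun e := e.toAddEquiv.toMultiplicative
  map_one' := rfl
  map_mul' _ _ := rfl

def θℚ : (ℚ × ℚ) ≃ₗ[ℚ] (ℚ × ℚ) where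
  toFun p := (5 * p.1 + 2 * p.2, -p.1)
  invFun p := (-p.2, (p.1 + 5 * p.2) / 2)
  map_add' p q := by ext <;> simp <;> ring
  map_smul' c p := by ext <;> simp; ring
  left_inv p := by ext <;> simp
  right_inv p := by ext <;> simp; ring

theorem θℚ_apply (p : ℚ × ℚ) : θℚ p = (5 * p.1 + 2 * p.2, -p.1) := rfl

theorem det_self_θℚ_ne_zero {w : ℚ × ℚ} (hw : w ≠ 0) : w.1 * (θℚ w).2 - w.2 * (θℚ w).1 ≠ 0 := by
  intro h
  simp only [θℚ_apply] at h
  have h17 : (2 * w.1 + 5 * w.2) ^ 2 = 17 * w.2 ^ 2 := by linear_combination -4 * h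
  by_cases hw2 : w.2 = 0
  · exact hw (Prod.ext (by simpa [hw2] using h17) hw2)
  · have : IsSquare (17 : ℚ) := ⟨(2 * w.1 + 5 * w.2) / w.2, by field_simp; linear_combination -h17⟩
    rw [← Nat.cast_ofNat, Rat.isSquare_natCast_iff] at this
    norm_num at this

theorem θℚ_mapsTo_cone :
    Set.MapsTo θℚ {v | 0 < v.1 ∧ -v.1 ≤ v.2 ∧ v.2 ≤ 0} {v | 0 < v.1 ∧ -v.1 ≤ v.2 ∧ v.2 ≤ 0} := by
  rintro ⟨a, b⟩ ⟨ha, hb, hb'⟩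
  simp only [Set.mem_ofPred_eq, θℚ_apply]
  exact ⟨by linarith, by linarith, by linarith⟩

theorem fst_θℚ_pow_apply_pos {n : ℕ} (hn : n ≠ 0) : 0 < ((θℚ ^ n) (0, 1)).1 := by
  obtain ⟨n, rfl⟩ := Nat.exists_eq_succ_of_ne_zero hn
  rw [LinearEquiv.coe_pow, Function.iterate_succ_apply]
  exact (θℚ_mapsTo_cone.iterate n (by norm_num [θℚ_apply])).1

theorem θℚ_zpow_apply_ne_smul {c : ℤ} (hc : c ≠ 0) (r : ℚ) : (θℚ ^ c) (0, 1) ≠ r • (0, 1) := by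
  intro h
  obtain ⟨n, rfl | rfl⟩ := Int.eq_nat_or_neg c
  · have := fst_θℚ_pow_apply_pos (n := n) (by omega)
    rw [← zpow_natCast, h] at this
    simp at this
  · have hpos := fst_θℚ_pow_apply_pos (n := n) (by omega)
    have h' : ((0, 1) : ℚ × ℚ) = r • (θℚ ^ n) (0, 1) := by
      rw [← map_smul, ← h, zpow_neg, zpow_natCast, LinearEquiv.coe_inv,
        LinearEquiv.apply_symm_apply]
    have hr : r = 0 := by
      have := congrArg Prod.fst h'
      simp only [Prod.smul_fst, smul_eq_mul] at this
      exact (mul_eq_zero.1 this.symm).resolve_right hpos.ne'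
    simp [hr] at h'

theorem eq_zero_of_θℚ_zpow_apply_eq_smul {c : ℤ} {r : ℚ} (hr : r ≠ 1) {w : ℚ × ℚ}
    (hw : (θℚ ^ c) w = r • w) : w = 0 := by
  by_contra hw0
  rcases eq_or_ne c 0 with rfl | hc
  · rw [zpow_zero, LinearEquiv.coe_one, id] at hw
    have : (1 - r) • w = 0 := by rw [sub_smul, one_smul, ← hw, sub_self]
    exact hw0 ((smul_eq_zero.1 this).resolve_left (sub_ne_zero.2 hr.symm))
  · have hθw : (θℚ ^ c) (θℚ w) = r • θℚ w := by
      rw [← LinearEquiv.mul_apply, (Commute.zpow_self θℚ c).eq, LinearEquiv.mul_apply, hw,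
        map_smul]
    exact θℚ_zpow_apply_ne_smul hc r
      (Prod.apply_eq_smul_of_apply_eq_smul (θℚ ^ c).toLinearMap hw hθw (det_self_θℚ_ne_zero hw0) _)

def θℚAct : Multiplicative ℤ →* MulAut (Multiplicative (ℚ × ℚ)) :=
  LinearEquiv.toMulAutMultiplicative.comp (zpowersHom _ θℚ)

theorem θℚAct_apply (c : Multiplicative ℤ) (v : Multiplicative (ℚ × ℚ)) :
    θℚAct c v = ofAdd ((θℚ ^ c.toAdd) v.toAdd) := rfl

theorem θℚAct_ofAdd_one (v : Multiplicative (ℚ × ℚ)) : θℚAct (ofAdd 1) v = ofAdd (θℚ v.toAdd) := by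
  rw [θℚAct_apply, toAdd_ofAdd, zpow_one]

abbrev G₁ℚ := Multiplicative (ℚ × ℚ) ⋊[θℚAct] Multiplicative ℤ

theorem eq_one_of_conj_eq_zpow_G₁ℚ {x y : G₁ℚ} {m : ℤ} (hm : m ≠ 1)
    (h : y * x * y⁻¹ = x ^ m) : x = 1 := by
  obtain ⟨w, rfl⟩ : ∃ w, inl w = x := by
    rw [← MonoidHom.mem_range, range_inl_eq_ker_rightHom]
    exact rightHom.map_eq_one_of_conj_eq_zpow hm h
  rw [conj_inl, ← map_zpow, inl_inj] at h
  have hw : (θℚ ^ y.right.toAdd) w.toAdd = (m : ℚ) • w.toAdd := by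
    rw [Int.cast_smul_eq_zsmul, ← toAdd_zpow, ← h, θℚAct_apply, toAdd_ofAdd]
  rw [← ofAdd_toAdd w, eq_zero_of_θℚ_zpow_apply_eq_smul (by exact_mod_cast hm) hw, ofAdd_zero,
    map_one]

def intCast₂ : ℤ × ℤ →+ ℚ × ℚ := (Int.castAddHom ℚ).prodMap (Int.castAddHom ℚ)

theorem intCast₂_injective : Function.Injective intCast₂ := fun p q h => by
  simpa [intCast₂, Prod.ext_iff] using h

theorem θℚ_intCast₂ (p : ℤ × ℤ) : θℚ (intCast₂ p) = intCast₂ (θ₀ p) := by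
  ext <;> simp [θℚ_apply, intCast₂, θ₀]

noncomputable def toG₁ℚ : G₁ →* G₁ℚ :=
  lift (inl.comp (AddMonoidHom.toMultiplicative intCast₂)) (inr (ofAdd 1)) fun a => by
    have hφ₁ : (φ₁ a : Multiplicative (ℤ × ℤ)).toAdd = θ₀ (a : Multiplicative (ℤ × ℤ)).toAdd := rfl
    simp only [MonoidHom.coe_comp, Function.comp_apply, AddMonoidHom.toMultiplicative_apply_apply,
      hφ₁, ← θℚ_intCast₂]
    rw [← toAdd_ofAdd (intCast₂ _), ← θℚAct_ofAdd_one, inl_aut, toAdd_ofAdd, map_inv,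
      inv_mul_cancel_right]

theorem toG₁ℚ_injective : Function.Injective toG₁ℚ :=
  lift_injective_of_top _ (inl_injective.comp (f := ofAdd ∘ intCast₂ ∘ toAdd) intCast₂_injective)
    rightHom (fun _ => rightHom_inl _) (rightHom_inr _)

/-- In `G₁`, any Baumslag–Solitar relation `y * x * y⁻¹ = x ^ m` with `|m| ≥ 2`
forces `x` to be of finite order, and hence (as `G₁` is torsion-free) `x = 1`. -/
theorem G₁_no_BS_relation (x y : G₁) (m : ℤ) (hm : 2 ≤ |m|)
    (h : y * x * y⁻¹ = x ^ m) : IsOfFinOrder x ∧ x = 1 := by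
  have hm1 : m ≠ 1 := by rintro rfl; norm_num at hm
  have hx : x = 1 := (map_eq_one_iff _ toG₁ℚ_injective).1 <|
    eq_one_of_conj_eq_zpow_G₁ℚ hm1 (by simpa using congrArg toG₁ℚ h)
  exact ⟨hx ▸ IsOfFinOrder.one, hx⟩
end

section
/- Let B̄ denote the image of ℤ × ℤ in G₁ under the base map of, a finitely generated subgroup of G₁. Then of((1,0)) does not lie in the subgroup t·B̄·t⁻¹, yet every finite-index subgroup H of G₁ with t·B̄·t⁻¹ ≤ H satisfies of((1,0)) ∈ H. Hence the finitely generated subgroup t·B̄·t⁻¹ is not an intersection of finite-index subgroups of G₁, so G₁ is not LERF. -/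
/-- The image of the base group `ℤ × ℤ` in `G₁` under the canonical map `of`. -/
noncomputable def Bbar : Subgroup G₁ := (HNNExtension.of : Multiplicative (ℤ × ℤ) →* G₁).range

/-- The conjugate `t • K • t⁻¹` of a subgroup `K` by an element `t`. -/
def conjSubgroup {G : Type*} [Group G] (t : G) (K : Subgroup G) : Subgroup G :=
  K.map (MulAut.conj t).toMonoidHom

/-- A group is LERF if every finitely generated subgroup is an intersection of
finite-index subgroups. -/
def IsLERF (G : Type*) [Group G] : Prop :=
  ∀ K : Subgroup G, K.FG →
    ∃ 𝒮 : Set (Subgroup G), (∀ H ∈ 𝒮, H.index ≠ 0) ∧ K = sInf 𝒮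

/-! Conjugation by `t` maps `B̄` onto `of(θ₀(ℤ × ℤ))`, a proper subgroup of `B̄` missing `of (1,0)`.
In a finite-index subgroup `H ⊇ t B̄ t⁻¹` with normal core `N`, the finite-index subgroup `L = B̄N`
satisfies `tLt⁻¹ ≤ L`; having the same index, `tLt⁻¹ = L`, so
`B̄ ≤ L = (t B̄ t⁻¹) N ≤ H`. -/

theorem Subgroup.le_of_conjSubgroup_le {G : Type*} [Group G] (g : G) {K H : Subgroup G}
    [H.FiniteIndex] (hK : conjSubgroup g K ≤ K) (hH : conjSubgroup g K ≤ H) : K ≤ H := by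
  set N := H.normalCore
  set L := K ⊔ N
  have : L.FiniteIndex := finiteIndex_of_le (le_sup_right : N ≤ L)
  have hconjL : conjSubgroup g L = conjSubgroup g K ⊔ N := by
    rw [conjSubgroup, map_sup]
    exact congrArg _ (Normal.map_conj_eq N g)
  have hconjL_le : conjSubgroup g L ≤ L := hconjL ▸ sup_le_sup_right hK N
  have hconjL_eq : conjSubgroup g L = L := by
    have hindex : (conjSubgroup g L).index = L.index := index_map_equiv L (MulAut.conj g)
    have : (conjSubgroup g L).FiniteIndex := ⟨hindex ▸ FiniteIndex.index_ne_zero⟩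
    exact eq_of_le_of_not_lt hconjL_le fun hlt => (index_strictAnti hlt).ne hindex.symm
  calc K ≤ L := le_sup_left
    _ = conjSubgroup g K ⊔ N := hconjL_eq ▸ hconjL
    _ ≤ H := sup_le hH H.normalCore_le

theorem Subgroup.ne_sInf_of_notMem_of_forall_index_ne_zero {G : Type*} [Group G]
    {K : Subgroup G} {x : G} (hxK : x ∉ K) (hx : ∀ H : Subgroup G, H.index ≠ 0 → K ≤ H → x ∈ H)
    {𝒮 : Set (Subgroup G)} (h𝒮 : ∀ H ∈ 𝒮, H.index ≠ 0) : K ≠ sInf 𝒮 := by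
  rintro rfl
  exact hxK <| mem_sInf.mpr fun H hH => hx H (h𝒮 H hH) (sInf_le hH)

theorem HNNExtension.conjSubgroup_t_map_of {G : Type*} [Group G] {A B : Subgroup G}
    (φ : A ≃* B) :
    conjSubgroup (t : HNNExtension G A B φ) (A.map of) = B.map of := by
  ext x
  constructor
  · rintro ⟨_, ⟨a, ha, rfl⟩, rfl⟩
    exact ⟨φ ⟨a, ha⟩, (φ ⟨a, ha⟩).2, equiv_eq_conj ⟨a, ha⟩⟩
  · rintro ⟨b, hb, rfl⟩
    refine ⟨of (φ.symm ⟨b, hb⟩ : G), ⟨_, (φ.symm ⟨b, hb⟩).2, rfl⟩, ?_⟩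
    simpa using (equiv_eq_conj (φ := φ) (φ.symm ⟨b, hb⟩)).symm

theorem ofAdd_one_zero_notMem_range_Θ₁ :
    Multiplicative.ofAdd ((1 : ℤ), (0 : ℤ)) ∉ Θ₁.range := by
  rintro ⟨x, hx⟩
  have h : θ₀ x.toAdd = ((1 : ℤ), (0 : ℤ)) := congrArg Multiplicative.toAdd hx
  simp only [θ₀, AddMonoidHom.coe_mk, ZeroHom.coe_mk, Prod.mk.injEq] at h
  omega

theorem conjSubgroup_t_Bbar :
    conjSubgroup HNNExtension.t Bbar = Θ₁.range.map (HNNExtension.of : _ →* G₁) := by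
  rw [Bbar, MonoidHom.range_eq_map HNNExtension.of]
  exact HNNExtension.conjSubgroup_t_map_of φ₁

/-- `B̄` is finitely generated, `of (1,0)` is not in `t • B̄ • t⁻¹`, but it lies in every
finite-index subgroup containing `t • B̄ • t⁻¹`; hence `t • B̄ • t⁻¹` is a finitely
generated subgroup which is not an intersection of finite-index subgroups,
and `G₁` is not LERF. -/
theorem G₁_not_LERF :
    Bbar.FG ∧
    HNNExtension.of (Multiplicative.ofAdd ((1 : ℤ), (0 : ℤ))) ∉
      conjSubgroup HNNExtension.t Bbar ∧
    (∀ H : Subgroup G₁, H.index ≠ 0 → conjSubgroup HNNExtension.t Bbar ≤ H →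
      HNNExtension.of (Multiplicative.ofAdd ((1 : ℤ), (0 : ℤ))) ∈ H) ∧
    (¬ ∃ 𝒮 : Set (Subgroup G₁), (∀ H ∈ 𝒮, H.index ≠ 0) ∧
      conjSubgroup HNNExtension.t Bbar = sInf 𝒮) ∧
    ¬ IsLERF G₁ := by
  have hBbar_fg : Bbar.FG := Group.fg_iff_subgroup_fg _ |>.mp (Group.fg_range _)
  have hconj_fg : (conjSubgroup HNNExtension.t Bbar).FG := by
    rw [conjSubgroup_t_Bbar, ← MonoidHom.range_comp]
    exact Group.fg_iff_subgroup_fg _ |>.mp (Group.fg_range _)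
  have hconj_le : conjSubgroup HNNExtension.t Bbar ≤ Bbar :=
    conjSubgroup_t_Bbar ▸ Subgroup.map_le_range _ _
  have hnot_mem : HNNExtension.of (Multiplicative.ofAdd ((1 : ℤ), (0 : ℤ))) ∉
      conjSubgroup HNNExtension.t Bbar := by
    rw [conjSubgroup_t_Bbar, Subgroup.mem_map_iff_mem (HNNExtension.of_injective _)]
    exact ofAdd_one_zero_notMem_range_Θ₁
  have hmem : ∀ H : Subgroup G₁, H.index ≠ 0 → conjSubgroup HNNExtension.t Bbar ≤ H →
      HNNExtension.of (Multiplicative.ofAdd ((1 : ℤ), (0 : ℤ))) ∈ H := fun H hH hle =>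
    have : H.FiniteIndex := ⟨hH⟩
    Subgroup.le_of_conjSubgroup_le _ hconj_le hle ⟨_, rfl⟩
  have hnot_sInf : ¬ ∃ 𝒮 : Set (Subgroup G₁), (∀ H ∈ 𝒮, H.index ≠ 0) ∧
      conjSubgroup HNNExtension.t Bbar = sInf 𝒮 := fun ⟨_, h𝒮, heq⟩ =>
    Subgroup.ne_sInf_of_notMem_of_forall_index_ne_zero hnot_mem hmem h𝒮 heq
  exact ⟨hBbar_fg, hnot_mem, hmem, hnot_sInf, fun hLERF => hnot_sInf (hLERF _ hconj_fg)⟩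
end

section
/- Proposition 2.2: Let G be a group, A a commutative group, φ : G →* A a group homomorphism with kernel K, let t ∈ G and let B be a subgroup of G such that t·B·t⁻¹ ≤ B and t·B·t⁻¹ ≠ B. Then t·(B ⊓ K)·t⁻¹ ≤ B ⊓ K and t·(B ⊓ K)·t⁻¹ ≠ B ⊓ K. -/
/-- Proposition 2.2: if `φ : G →* A` is a homomorphism to an abelian group with
kernel `K`, and `B ≤ G` satisfies `t • B • t⁻¹ < B`, then also
`t • (B ⊓ K) • t⁻¹ < B ⊓ K`. -/
theorem conj_inf_ker_strict {G A : Type*} [Group G] [CommGroup A]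
    (φ : G →* A) (t : G) (B : Subgroup G)
    (hle : conjSubgroup t B ≤ B) (hne : conjSubgroup t B ≠ B) :
    conjSubgroup t (B ⊓ φ.ker) ≤ B ⊓ φ.ker ∧ conjSubgroup t (B ⊓ φ.ker) ≠ B ⊓ φ.ker := by
  constructor
  · rintro x ⟨y, ⟨hyB, hyK⟩, rfl⟩
    refine ⟨hle ⟨y, hyB, rfl⟩, ?_⟩
    have h1 : φ y = 1 := hyK
    show φ (t * y * t⁻¹) = 1
    rw [map_mul, map_mul, map_inv, mul_comm (φ t) (φ y), mul_assoc, mul_inv_cancel, mul_one, h1]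
  · intro heq
    apply hne
    refine le_antisymm hle fun b hb => ?_
    have hu : t * b * t⁻¹ * b⁻¹ ∈ B ⊓ φ.ker := by
      refine ⟨B.mul_mem (hle ⟨b, hb, rfl⟩) (B.inv_mem hb), ?_⟩
      show φ (t * b * t⁻¹ * b⁻¹) = 1
      simp [mul_comm, mul_assoc, mul_left_comm]
    rw [← heq] at hu
    obtain ⟨c, ⟨hcB, _⟩, hc⟩ := hu
    refine ⟨c⁻¹ * b, B.mul_mem (B.inv_mem hcB) hb, ?_⟩
    simp only [MulEquiv.coe_toMonoidHom, MulAut.conj_apply] at hc ⊢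
    have : t * c * t⁻¹ * b = t * b * t⁻¹ := by rw [hc]; group
    calc t * (c⁻¹ * b) * t⁻¹ = (t * c * t⁻¹)⁻¹ * (t * b * t⁻¹) := by group
    _ = (t * c * t⁻¹)⁻¹ * (t * c * t⁻¹ * b) := by rw [this]
    _ = b := by group
end

section
/- (Blass–Neumann separability obstruction.) Let G be a group, t ∈ G, and B a subgroup of G with t·B·t⁻¹ ≤ B. Then for every b ∈ B and every finite-index subgroup H of G with t·B·t⁻¹ ≤ H, we have b ∈ H. In particular, if t·B·t⁻¹ ≠ B then the subgroup t·B·t⁻¹ is not an intersection of finite-index subgroups of G. -/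
lemma conj_pow_mem {G : Type*} [Group G] {t : G} {B : Subgroup G}
    (hle : conjSubgroup t B ≤ B) {b : G} (hb : b ∈ B) :
    ∀ n : ℕ, 0 < n → t ^ n * b * (t ^ n)⁻¹ ∈ conjSubgroup t B := by
  intro n hn
  induction n with
  | zero => omega
  | succ m ih =>
    rcases Nat.eq_zero_or_pos m with hm | hm
    · subst hm
      exact ⟨b, hb, by simp⟩
    · have h1 : t ^ m * b * (t ^ m)⁻¹ ∈ B := hle (ih hm)
      refine ⟨t ^ m * b * (t ^ m)⁻¹, h1, ?_⟩
      simp [pow_succ']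
      group

/-- Blass–Neumann separability obstruction: if `t • B • t⁻¹ ≤ B` then every
finite-index subgroup containing `t • B • t⁻¹` contains all of `B`; in
particular, if `t • B • t⁻¹ ≠ B` then `t • B • t⁻¹` is not an intersection of
finite-index subgroups of `G`. -/
theorem blass_neumann {G : Type*} [Group G] (t : G) (B : Subgroup G)
    (hle : conjSubgroup t B ≤ B) :
    (∀ b ∈ B, ∀ H : Subgroup G, H.index ≠ 0 → conjSubgroup t B ≤ H → b ∈ H) ∧
    (conjSubgroup t B ≠ B →
      ¬ ∃ 𝒮 : Set (Subgroup G), (∀ H ∈ 𝒮, H.index ≠ 0) ∧ conjSubgroup t B = sInf 𝒮) := by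
  have main : ∀ b ∈ B, ∀ H : Subgroup G, H.index ≠ 0 → conjSubgroup t B ≤ H → b ∈ H := by
    intro b hb H hidx hH
    obtain ⟨k, hk, -, htk⟩ := Subgroup.exists_pow_mem_of_index_ne_zero hidx t
    have h1 : t ^ k * b * (t ^ k)⁻¹ ∈ H := hH (conj_pow_mem hle hb k hk)
    have : (t ^ k)⁻¹ * (t ^ k * b * (t ^ k)⁻¹) * t ^ k ∈ H :=
      H.mul_mem (H.mul_mem (H.inv_mem htk) h1) htk
    simpa [mul_assoc] using this
  refine ⟨main, fun hne ⟨𝒮, h𝒮, hinf⟩ => ?_⟩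
  apply hne
  refine le_antisymm hle (hinf ▸ le_sInf fun H hH => fun b hb => ?_)
  exact main b hb H (h𝒮 H hH) (hinf ▸ sInf_le hH)
end

section
/- The additive endomorphism L of ℤ →₀ ℤ given by L f = f + S f is injective but not surjective; in particular the single generator Finsupp.single 0 1 is not in the range of L. -/
/-- The shift automorphism `S` of `ℤ →₀ ℤ`, with `(S f) j = f (j - 1)`. -/
def S : AddAut (ℤ →₀ ℤ) := (Finsupp.domCongr (Equiv.addRight (1 : ℤ)) : (ℤ →₀ ℤ) ≃+ (ℤ →₀ ℤ))

theorem S_apply (f : ℤ →₀ ℤ) (j : ℤ) : S f j = f (j - 1) := by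
  simp [S, Finsupp.domCongr_apply, sub_eq_add_neg]

/-- The additive endomorphism `L f = f + S f` of `ℤ →₀ ℤ`. -/
noncomputable def L : AddMonoid.End (ℤ →₀ ℤ) :=
  AddMonoidHom.mk' (fun f => f + S f) (by intro a b; simp only [map_add]; abel)

theorem L_def (f : ℤ →₀ ℤ) : L f = f + S f := rfl

theorem L_apply' (f : ℤ →₀ ℤ) (j : ℤ) : L f j = f j + f (j - 1) := by
  rw [L_def, Finsupp.add_apply, S_apply]

/-- `L` is injective but not surjective; in particular `Finsupp.single 0 1` is
not in the range of `L`. -/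
theorem L_injective_not_surjective :
    Function.Injective L ∧ ¬ Function.Surjective L ∧
      Finsupp.single (0 : ℤ) (1 : ℤ) ∉ Set.range L := by
  have hinj : Function.Injective L := by
    rw [injective_iff_map_eq_zero]
    intro f hf
    by_contra hne
    have hsupp : f.support.Nonempty := Finsupp.support_nonempty_iff.mpr hne
    set j := f.support.min' hsupp with hj
    have hjmem : j ∈ f.support := f.support.min'_mem hsupp
    have h1 : f (j - 1) = 0 := by
      by_contra h
      have : j - 1 ∈ f.support := Finsupp.mem_support_iff.mpr h
      have := f.support.min'_le _ this
      omega
    have h2 : L f j = 0 := by rw [hf]; rfl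
    rw [L_apply', h1, add_zero] at h2
    exact Finsupp.mem_support_iff.mp hjmem h2
  have hnr : Finsupp.single (0 : ℤ) (1 : ℤ) ∉ Set.range L := by
    rintro ⟨f, hf⟩
    have heq : ∀ j : ℤ, f j + f (j - 1) = if j = 0 then 1 else 0 := by
      intro j
      rw [← L_apply', hf, Finsupp.single_apply]
      simp [eq_comm]
    -- negative side: f (-1 - n) = (-1)^n * f (-1)
    have hneg : ∀ n : ℕ, f (-1 - n) = (-1 : ℤ) ^ n * f (-1) := by
      intro n
      induction n with
      | zero => simp
      | succ n ih =>
        have h := heq (-1 - n)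
        rw [if_neg (by omega)] at h
        have hx : (-1 : ℤ) - (n + 1 : ℕ) = (-1 - n) - 1 := by push_cast; ring
        rw [hx]
        have : f ((-1 - n) - 1) = -f (-1 - n) := by linarith
        rw [this, ih, pow_succ]
        ring
    -- f (-1) = 0
    have hm1 : f (-1) = 0 := by
      by_contra h
      have hinjmap : Function.Injective (fun n : ℕ => (-1 : ℤ) - n) := by
        intro a b hab
        simp only at hab
        omega
      have hsub : Set.range (fun n : ℕ => (-1 : ℤ) - n) ⊆ ↑f.support := by
        rintro x ⟨n, rfl⟩
        apply Finsupp.mem_support_iff.mpr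
        rw [hneg n]
        exact mul_ne_zero (pow_ne_zero _ (by norm_num)) h
      exact (Set.infinite_range_of_injective hinjmap).mono hsub
        (Set.toFinite _)
    have h0 : f 0 = 1 := by
      have h := heq 0
      rw [if_pos rfl] at h
      simpa [hm1] using h
    have hpos : ∀ n : ℕ, f n = (-1 : ℤ) ^ n := by
      intro n
      induction n with
      | zero => simpa using h0
      | succ n ih =>
        have h := heq (n + 1 : ℕ)
        rw [if_neg (by push_cast; omega)] at h
        have hx : ((n + 1 : ℕ) : ℤ) - 1 = (n : ℤ) := by push_cast; ring
        rw [hx, ih] at h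
        rw [pow_succ]
        linarith
    have hinjmap : Function.Injective (fun n : ℕ => (n : ℤ)) := by
      intro a b hab; simpa using hab
    have hsub : Set.range (fun n : ℕ => (n : ℤ)) ⊆ ↑f.support := by
      rintro x ⟨n, rfl⟩
      apply Finsupp.mem_support_iff.mpr
      rw [hpos n]
      exact pow_ne_zero _ (by norm_num)
    exact (Set.infinite_range_of_injective hinjmap).mono hsub (Set.toFinite _)
  exact ⟨hinj, fun hs => hnr (hs _), hnr⟩
end

section
/- Let χ : H →* ℤ be the associated homomorphism of the ascending HNN extension, determined by χ(t) = 1 and χ(of g) = 0 for all g ∈ G₀. Then for every finitely generated subgroup C of the kernel of χ there exists a natural number i such that t^i · c · t^(−i) lies in the range of the base map of for every c ∈ C; that is, C is contained in a conjugate t^(−i)·(of.range)·t^i of the base. -/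
open HNNExtension

section Aux

variable {G₀ : Type*} [Group G₀] (ψ : G₀ →* G₀) (hψ : Function.Injective ψ)

local notation "Φ" => Subgroup.topEquiv.trans (MonoidHom.ofInjective hψ)

lemma aux_key (k : ℕ) (g : G₀) :
    t ^ k * of (G := G₀) (A := ⊤) (B := ψ.range) (φ := Φ) g
      = of (ψ^[k] g) * t ^ k := by
  induction k generalizing g with
  | zero => simp
  | succ k ih =>
    have h1 : t * of (G := G₀) (A := ⊤) (B := ψ.range) (φ := Φ) (ψ^[k] g)
        = of (ψ (ψ^[k] g)) * t := t_mul_of (⟨ψ^[k] g, trivial⟩ : (⊤ : Subgroup G₀))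
    rw [pow_succ', mul_assoc, ih, ← mul_assoc, h1, Function.iterate_succ_apply',
      mul_assoc, ← pow_succ']

lemma aux_key' (k : ℕ) (g : G₀) :
    of (G := G₀) (A := ⊤) (B := ψ.range) (φ := Φ) g * (t ^ k)⁻¹
      = (t ^ k)⁻¹ * of (ψ^[k] g) := by
  rw [eq_comm, inv_mul_eq_iff_eq_mul, ← mul_assoc, aux_key ψ hψ, mul_assoc,
    mul_inv_cancel, mul_one]

end Aux
section Main

variable {G₀ : Type*} [Group G₀] (ψ : G₀ →* G₀) (hψ : Function.Injective ψ)

local notation "Φ" => Subgroup.topEquiv.trans (MonoidHom.ofInjective hψ)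

lemma aux_normal_form (x : HNNExtension G₀ ⊤ ψ.range Φ) :
    ∃ (m n : ℕ) (g : G₀), x = ((t ^ m)⁻¹ * of g * t ^ n : HNNExtension G₀ ⊤ ψ.range Φ) := by
  induction x using HNNExtension.induction_on with
  | of g => exact ⟨0, 0, g, by simp⟩
  | t => exact ⟨0, 1, 1, by simp⟩
  | inv x hx =>
    obtain ⟨m, n, g, rfl⟩ := hx
    exact ⟨n, m, g⁻¹, by simp [mul_assoc]⟩
  | mul x y hx hy =>
    obtain ⟨m, n, g, rfl⟩ := hx
    obtain ⟨m', n', g', rfl⟩ := hy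
    rcases le_or_gt m' n with h | h
    · refine ⟨m, n - m' + n', g * ψ^[n - m'] g', ?_⟩
      have h1 : (t ^ n * (t ^ m')⁻¹ : HNNExtension G₀ ⊤ ψ.range Φ) = t ^ (n - m') := by
        conv_lhs => rw [show n = n - m' + m' by omega]
        rw [pow_add, mul_assoc, mul_inv_cancel, mul_one]
      calc (t ^ m)⁻¹ * of g * t ^ n * ((t ^ m')⁻¹ * of g' * t ^ n')
          = (t ^ m)⁻¹ * of g * (t ^ n * (t ^ m')⁻¹) * of g' * t ^ n' := by
            group
        _ = (t ^ m)⁻¹ * of g * (t ^ (n - m') * of g') * t ^ n' := by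
            rw [h1]; group
        _ = (t ^ m)⁻¹ * of (g * ψ^[n - m'] g') * t ^ (n - m' + n') := by
            rw [aux_key ψ hψ, pow_add]
            simp [mul_assoc]
    · refine ⟨m' - n + m, n', ψ^[m' - n] g * g', ?_⟩
      have h1 : (t ^ n * (t ^ m')⁻¹ : HNNExtension G₀ ⊤ ψ.range Φ) = (t ^ (m' - n))⁻¹ := by
        conv_lhs => rw [show m' = m' - n + n by omega]
        rw [pow_add, mul_inv_rev, ← mul_assoc, mul_inv_cancel, one_mul]
      calc (t ^ m)⁻¹ * of g * t ^ n * ((t ^ m')⁻¹ * of g' * t ^ n')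
          = (t ^ m)⁻¹ * (of g * (t ^ n * (t ^ m')⁻¹)) * of g' * t ^ n' := by
            group
        _ = (t ^ m)⁻¹ * ((t ^ (m' - n))⁻¹ * of (ψ^[m' - n] g)) * of g' * t ^ n' := by
            rw [h1, aux_key' ψ hψ]
        _ = (t ^ (m' - n + m))⁻¹ * of (ψ^[m' - n] g * g') * t ^ n' := by
            rw [pow_add, mul_inv_rev]
            simp [mul_assoc]

end Main

/-- Let `χ` be the associated homomorphism of an ascending HNN extension
(`χ t = 1` and `χ (of g) = 0`, written multiplicatively with values in
`Multiplicative ℤ`). Every finitely generated subgroup `C` of `ker χ` is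
contained in a conjugate `t⁻ⁱ • (of.range) • tⁱ` of the base: there is `i : ℕ`
with `tⁱ * c * t⁻ⁱ` in the range of `of` for every `c ∈ C`. -/
theorem fg_subgroup_of_ker_conjugate_into_base {G₀ : Type*} [Group G₀]
    (ψ : G₀ →* G₀) (hψ : Function.Injective ψ)
    (χ : HNNExtension G₀ ⊤ ψ.range (Subgroup.topEquiv.trans (MonoidHom.ofInjective hψ)) →*
      Multiplicative ℤ)
    (hχt : χ HNNExtension.t = Multiplicative.ofAdd 1)
    (hχof : ∀ g : G₀, χ (HNNExtension.of g) = 1)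
    (C : Subgroup
      (HNNExtension G₀ ⊤ ψ.range (Subgroup.topEquiv.trans (MonoidHom.ofInjective hψ))))
    (hC : C ≤ χ.ker) (hCfg : C.FG) :
    ∃ i : ℕ, ∀ c ∈ C,
      HNNExtension.t ^ i * c * (HNNExtension.t ^ i)⁻¹ ∈
        (HNNExtension.of (G := G₀) (A := ⊤) (B := ψ.range)
          (φ := Subgroup.topEquiv.trans (MonoidHom.ofInjective hψ))).range := by
  classical
  let D : ℕ → Subgroup (HNNExtension G₀ ⊤ ψ.range
      (Subgroup.topEquiv.trans (MonoidHom.ofInjective hψ))) := fun i =>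
    Subgroup.comap (MulAut.conj (t ^ i)).toMonoidHom
      (HNNExtension.of (G := G₀) (A := ⊤) (B := ψ.range)
        (φ := Subgroup.topEquiv.trans (MonoidHom.ofInjective hψ))).range
  have hD : ∀ (i : ℕ) c, c ∈ D i ↔ t ^ i * c * (t ^ i)⁻¹ ∈
      (HNNExtension.of (G := G₀) (A := ⊤) (B := ψ.range)
        (φ := Subgroup.topEquiv.trans (MonoidHom.ofInjective hψ))).range := by
    intro i c
    simp only [D, Subgroup.mem_comap, MulEquiv.coe_toMonoidHom, MulAut.conj_apply]
  have hmono : Monotone D := by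
    refine monotone_nat_of_le_succ fun i c hc => ?_
    rw [hD] at hc ⊢
    obtain ⟨g, hg⟩ := hc
    refine ⟨ψ g, ?_⟩
    have h2 : t ^ (i + 1) * c * (t ^ (i + 1))⁻¹ =
        t * (t ^ i * c * (t ^ i)⁻¹) * t⁻¹ := by group
    rw [h2, ← hg]
    have hcoe : (((Subgroup.topEquiv.trans (MonoidHom.ofInjective hψ))
        (⟨g, trivial⟩ : (⊤ : Subgroup G₀)) : ψ.range) : G₀) = ψ g := rfl
    have h4 := (equiv_eq_conj (G := G₀) (A := ⊤) (B := ψ.range)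
      (φ := Subgroup.topEquiv.trans (MonoidHom.ofInjective hψ))
      (⟨g, trivial⟩ : (⊤ : Subgroup G₀)))
    rw [hcoe] at h4
    exact h4
  have main : ∀ c ∈ χ.ker, ∃ m : ℕ, c ∈ D m := by
    intro c hc
    obtain ⟨m, n, g, rfl⟩ := aux_normal_form ψ hψ c
    rw [MonoidHom.mem_ker] at hc
    simp only [map_mul, map_inv, map_pow, hχt, hχof, mul_one] at hc
    have hc' := congrArg Multiplicative.toAdd hc
    simp only [toAdd_mul, toAdd_inv, toAdd_pow, toAdd_ofAdd, toAdd_one, nsmul_eq_mul,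
      mul_one] at hc'
    have hmn : m = n := by omega
    subst hmn
    refine ⟨m, ?_⟩
    rw [hD]
    have h3 : t ^ m * ((t ^ m)⁻¹ * of g * t ^ m) * (t ^ m)⁻¹ =
        (of g : HNNExtension G₀ ⊤ ψ.range (Subgroup.topEquiv.trans (MonoidHom.ofInjective hψ))) := by
      group
    rw [h3]
    exact ⟨g, rfl⟩
  obtain ⟨S, hS⟩ := hCfg
  have hgen : ∀ s ∈ S, ∃ m, s ∈ D m := fun s hs =>
    main s (hC (hS ▸ Subgroup.subset_closure hs))
  choose f hf using hgen
  refine ⟨S.attach.sup fun s => f s s.2, ?_⟩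
  have hCD : C ≤ D (S.attach.sup fun s => f s s.2) := by
    rw [← hS, Subgroup.closure_le]
    intro s hs
    exact hmono (Finset.le_sup (Finset.mem_attach S ⟨s, hs⟩)) (hf s hs)
  intro c hc
  exact (hD _ c).mp (hCD hc)
end

section
/- If the base group G₀ is solvable, then the ascending HNN extension H = HNNExtension G₀ ⊤ ψ.range φ is solvable. -/
/-!
The conjugates `t⁻ⁿ G₀ tⁿ` form an ascending chain of copies of `G₀`, because `t G₀ t⁻¹ ≤ G₀`.
Their union `N` is a normal subgroup whose derived series vanishes at the derived length of
`G₀`, and `H ⧸ N` is generated by the image of `t`, hence abelian.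
-/

open Subgroup HNNExtension

namespace Subgroup

variable {G : Type*} [Group G]

theorem commutator_iSup_le_of_directed {ι : Type*} [Nonempty ι] {K : ι → Subgroup G}
    (hK : Directed (· ≤ ·) K) : ⁅⨆ i, K i, ⨆ i, K i⁆ ≤ ⨆ i, ⁅K i, K i⁆ := by
  rw [commutator_le]
  intro x hx y hy
  obtain ⟨i, hxi⟩ := (mem_iSup_of_directed hK).1 hx
  obtain ⟨j, hyj⟩ := (mem_iSup_of_directed hK).1 hy
  obtain ⟨k, hik, hjk⟩ := hK i j
  exact le_iSup (fun i => ⁅K i, K i⁆) k (commutator_mem_commutator (hik hxi) (hjk hyj))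

theorem map_subtype_derivedSeries_mono {K L : Subgroup G} (h : K ≤ L) (n : ℕ) :
    (derivedSeries K n).map K.subtype ≤ (derivedSeries L n).map L.subtype := by
  rw [← subtype_comp_inclusion h, ← map_map]
  exact map_mono (map_derivedSeries_le_derivedSeries _ n)

theorem map_subtype_derivedSeries_iSup_le {ι : Type*} [Nonempty ι] {K : ι → Subgroup G}
    (hK : Directed (· ≤ ·) K) (n : ℕ) :
    (derivedSeries (⨆ i, K i : Subgroup G) n).map (⨆ i, K i).subtype ≤
      ⨆ i, (derivedSeries (K i) n).map (K i).subtype := by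
  induction n with
  | zero => simp [← MonoidHom.range_eq_map]
  | succ n ih =>
    have hdir : Directed (· ≤ ·) fun i => (derivedSeries (K i) n).map (K i).subtype :=
      hK.mono_comp (· ≤ ·) fun _ _ h => map_subtype_derivedSeries_mono h n
    simp only [derivedSeries_succ, map_commutator]
    exact (commutator_mono ih ih).trans (commutator_iSup_le_of_directed hdir)

theorem derivedSeries_iSup_eq_bot_of_directed {ι : Type*} [Nonempty ι] {K : ι → Subgroup G}
    (hK : Directed (· ≤ ·) K) {n : ℕ} (h : ∀ i, derivedSeries (K i) n = ⊥) :
    derivedSeries (⨆ i, K i : Subgroup G) n = ⊥ := by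
  rw [← map_eq_bot_iff_of_injective _ (subtype_injective _), ← le_bot_iff]
  simpa [h] using map_subtype_derivedSeries_iSup_le hK n

theorem derivedSeries_map_eq_bot {G' : Type*} [Group G'] (f : G →* G') {K : Subgroup G} {n : ℕ}
    (h : derivedSeries K n = ⊥) : derivedSeries (K.map f) n = ⊥ := by
  rw [← map_derivedSeries_eq (f.subgroupMap_surjective K), h, map_bot]

theorem isSolvable_of_sup_eq_top {A N : Subgroup G} [N.Normal] [Group.IsSolvable A]
    [Group.IsSolvable N] (h : A ⊔ N = ⊤) : Group.IsSolvable G := by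
  have hsurj : Function.Surjective ((QuotientGroup.mk' N).comp A.subtype) := by
    rintro ⟨x⟩
    obtain ⟨a, ha, n, hn, rfl⟩ := mem_sup_of_normal_right.1 (h ▸ mem_top x)
    exact ⟨⟨a, ha⟩, QuotientGroup.eq.2 (by simpa using hn)⟩
  have := Group.isSolvable_of_surjective hsurj
  exact Group.isSolvable_of_ker_le_range N.subtype (QuotientGroup.mk' N) (by simp)

end Subgroup

theorem Group.isSolvable_of_zpowers_sup_eq_top {G : Type*} [Group G] {B : Subgroup G} {t : G}
    (hB : ∀ b ∈ B, t * b * t⁻¹ ∈ B) (hgen : zpowers t ⊔ B = ⊤) [Group.IsSolvable B] :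
    Group.IsSolvable G := by
  set K : ℕ → Subgroup G := fun n => B.comap (MulAut.conj (t ^ n) : G →* G)
  have mem_K {n : ℕ} {x : G} : x ∈ K n ↔ t ^ n * x * (t ^ n)⁻¹ ∈ B := Iff.rfl
  have hK : Monotone K := monotone_nat_of_le_succ fun n x hx => by
    rw [mem_K] at hx ⊢
    simpa [pow_succ', mul_assoc] using hB _ hx
  set N := ⨆ n, K n
  have mem_N {x : G} : x ∈ N ↔ ∃ n, t ^ n * x * (t ^ n)⁻¹ ∈ B :=
    mem_iSup_of_directed hK.directed_le
  have hBN : B ≤ N := fun b hb => mem_N.2 ⟨0, by simpa using hb⟩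
  have : N.Normal := by
    rw [← normalizer_eq_top_iff, eq_top_iff, ← hgen, sup_le_iff, zpowers_le]
    refine ⟨mem_normalizer_iff.2 fun x => ?_, hBN.trans le_normalizer⟩
    rw [mem_N, mem_N]
    constructor
    · rintro ⟨n, hn⟩
      exact ⟨n, by simpa [pow_succ, mul_assoc] using mem_K.1 (hK n.le_succ hn)⟩
    · rintro ⟨n, hn⟩
      exact ⟨n + 1, by simpa [pow_succ, mul_assoc] using hn⟩
  obtain ⟨d, hd⟩ := Group.IsSolvable.solvable (G := B)
  have : Group.IsSolvable N := ⟨d, derivedSeries_iSup_eq_bot_of_directed hK.directed_le fun n => by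
    rw [show K n = _ from comap_equiv_eq_map_symm _ B]
    exact derivedSeries_map_eq_bot _ hd⟩
  have : Group.IsSolvable (zpowers t) := Group.isSolvable_of_comm mul_comm'
  exact isSolvable_of_sup_eq_top (top_le_iff.1 (hgen ▸ sup_le_sup_left hBN _))

/-- If the base group `G₀` is solvable then the ascending HNN extension of `G₀`
along an injective endomorphism `ψ` is solvable. -/
theorem ascending_hnn_solvable {G₀ : Type*} [Group G₀]
    (ψ : G₀ →* G₀) (hψ : Function.Injective ψ) [Group.IsSolvable G₀] :
    Group.IsSolvable (HNNExtension G₀ ⊤ ψ.range (Subgroup.topEquiv.trans (MonoidHom.ofInjective hψ))) := by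
  set H := HNNExtension G₀ ⊤ ψ.range (Subgroup.topEquiv.trans (MonoidHom.ofInjective hψ))
  have : Group.IsSolvable (of : G₀ →* H).range :=
    Group.isSolvable_of_surjective of.rangeRestrict_surjective
  refine Group.isSolvable_of_zpowers_sup_eq_top (B := of.range) (t := t) ?_ ?_
  · rintro _ ⟨g, rfl⟩
    exact ⟨ψ g, equiv_eq_conj ⟨g, mem_top g⟩⟩
  · refine (eq_top_iff' _).2 fun x => ?_
    induction x using HNNExtension.induction_on with
    | of g => exact mem_sup_right ⟨g, rfl⟩
    | t => exact mem_sup_left (mem_zpowers t)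
    | mul x y hx hy => exact mul_mem hx hy
    | inv x hx => exact inv_mem hx
end
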